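/- Let G₁ be the group presented by generators a, b, c and relators a², b², c², (abc)². Then the homomorphism σ₁ from G₁ to the group of affine equivalences of ℝ² determined by σ₁(a)(x,y) = (2 − x, 1 − y), σ₁(b)(x,y) = (3 − x, 3 − y), σ₁(c)(x,y) = (1 − x, 2 − y) is well defined (the images satisfy the relators) and injective. -/

import Mathlib

/-!
Put `t₁ = b a` and `t₂ = c a`. Conjugation by the involution `a` inverts both, and the relator
`(abc)²` makes them commute, so every element of `G₁` is `t₁ᵐ t₂ⁿ` or `t₁ᵐ t₂ⁿ a`. Under `σ₁` the
generators go to point reflections, so `t₁` and `t₂` go to the translations by `(1, 2)` and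
`(-1, 1)`. The image of `t₁ᵐ t₂ⁿ` is then the translation by
`m (1, 2) + n (-1, 1)`, trivial only for `m = n = 0`, and a translation followed by a point
reflection is never the identity.
-/

open AffineEquiv Function Subgroup

section NormalForm

variable {G : Type*} [Group G] {t₁ t₂ g : G}

theorem SemiconjBy.mul_zpow_mul_zpow (h₁ : SemiconjBy g t₁ t₁⁻¹) (h₂ : SemiconjBy g t₂ t₂⁻¹)
    (m n : ℤ) : g * (t₁ ^ m * t₂ ^ n) = t₁ ^ (-m) * t₂ ^ (-n) * g := by
  simpa [zpow_neg] using ((h₁.zpow_right m).mul_right (h₂.zpow_right n)).eq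

theorem exists_eq_zpow_mul_zpow_mul_zpow_of_mem_closure (hcomm : Commute t₁ t₂)
    (h₁ : SemiconjBy g t₁ t₁⁻¹) (h₂ : SemiconjBy g t₂ t₂⁻¹) {q : G}
    (hq : q ∈ closure {t₁, t₂, g}) : ∃ m n k : ℤ, q = t₁ ^ m * t₂ ^ n * g ^ k := by
  have h₁' : SemiconjBy g⁻¹ t₁ t₁⁻¹ := by simpa using h₁.inv_symm_left.inv_right
  have h₂' : SemiconjBy g⁻¹ t₂ t₂⁻¹ := by simpa using h₂.inv_symm_left.inv_right
  induction hq using closure_induction_left with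
  | one => exact ⟨0, 0, 0, by simp⟩
  | mul_left s hs _ _ ih =>
    obtain ⟨m, n, k, rfl⟩ := ih
    rcases hs with rfl | rfl | rfl
    · exact ⟨1 + m, n, k, by group⟩
    · exact ⟨m, 1 + n, k, by rw [← mul_assoc, ← mul_assoc, (hcomm.symm.zpow_right m).eq]; group⟩
    · exact ⟨-m, -n, 1 + k, by rw [← mul_assoc, h₁.mul_zpow_mul_zpow h₂]; group⟩
  | inv_mul_cancel s hs _ _ ih =>
    obtain ⟨m, n, k, rfl⟩ := ih
    rcases hs with rfl | rfl | rfl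
    · exact ⟨-1 + m, n, k, by group⟩
    · exact ⟨m, -1 + n, k, by
        rw [← mul_assoc, ← mul_assoc, (hcomm.symm.inv_left.zpow_right m).eq]; group⟩
    · exact ⟨-m, -n, -1 + k, by rw [← mul_assoc, h₁'.mul_zpow_mul_zpow h₂']; group⟩

end NormalForm

section Involutions

variable {G : Type*} [Group G] {x y z : G}

theorem semiconjBy_mul_inv_of_sq_eq_one (hx : x ^ 2 = 1) (hy : y ^ 2 = 1) :
    SemiconjBy x (y * x) (y * x)⁻¹ := by
  rw [SemiconjBy, mul_inv_rev, inv_eq_of_mul_eq_one_right (pow_two x ▸ hx),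
    inv_eq_of_mul_eq_one_right (pow_two y ▸ hy), mul_assoc]

theorem commute_mul_mul_of_sq_eq_one (hx : x ^ 2 = 1) (hy : y ^ 2 = 1) (hz : z ^ 2 = 1)
    (hxyz : (x * y * z) ^ 2 = 1) : Commute (y * x) (z * x) := by
  have hinv : ∀ w : G, w ^ 2 = 1 → w⁻¹ = w := fun w h => inv_eq_of_mul_eq_one_right (pow_two w ▸ h)
  have hzxy : z * x * y = y * x * z := by
    calc z * x * y = z * (x * y * z) * z⁻¹ := by group
      _ = z * (x * y * z)⁻¹ * z⁻¹ := by rw [hinv _ hxyz]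
      _ = y⁻¹ * x⁻¹ * z⁻¹ := by group
      _ = y * x * z := by rw [hinv x hx, hinv y hy, hinv z hz]
  calc y * x * (z * x) = y * x * z * x := by group
    _ = z * x * (y * x) := by rw [← hzxy]; group

theorem exists_eq_zpow_mul_zpow_or_mul (hgen : closure {x, y, z} = ⊤) (hx : x ^ 2 = 1)
    (hy : y ^ 2 = 1) (hz : z ^ 2 = 1) (hxyz : (x * y * z) ^ 2 = 1) (q : G) :
    ∃ m n : ℤ, q = (y * x) ^ m * (z * x) ^ n ∨ q = (y * x) ^ m * (z * x) ^ n * x := by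
  have hle : closure {x, y, z} ≤ closure {y * x, z * x, x} := by
    rw [closure_le, Set.insert_subset_iff, Set.insert_subset_iff, Set.singleton_subset_iff]
    have hx' : x ∈ closure {y * x, z * x, x} := subset_closure (by simp)
    refine ⟨hx', ?_, ?_⟩
    · simpa using mul_mem (subset_closure (by simp) : y * x ∈ closure {y * x, z * x, x})
        (inv_mem hx')
    · simpa using mul_mem (subset_closure (by simp) : z * x ∈ closure {y * x, z * x, x})
        (inv_mem hx')
  obtain ⟨m, n, k, rfl⟩ := exists_eq_zpow_mul_zpow_mul_zpow_of_mem_closure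
    (commute_mul_mul_of_sq_eq_one hx hy hz hxyz) (semiconjBy_mul_inv_of_sq_eq_one hx hy)
    (semiconjBy_mul_inv_of_sq_eq_one hx hz) (hle (hgen ▸ mem_top q))
  refine ⟨m, n, ?_⟩
  obtain ⟨j, rfl | rfl⟩ := Int.even_or_odd' k
  · left; rw [zpow_mul, zpow_ofNat, hx, one_zpow, mul_one]
  · right; rw [zpow_add, zpow_mul, zpow_ofNat, hx, one_zpow, one_mul, zpow_one]

end Involutions

section PointReflection

variable {k V P : Type*} [Ring k] [AddCommGroup V] [Module k V] [AddTorsor V P]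

theorem pointReflection_sq (a : P) : pointReflection k a ^ 2 = 1 := by
  ext p
  exact Equiv.pointReflection_involutive a p

theorem pointReflection_vadd (v : V) (c : P) :
    pointReflection k (v +ᵥ c) = constVAdd k P (2 • v) * pointReflection k c := by
  ext p
  rw [AffineEquiv.coe_mul, comp_apply, constVAdd_apply, coe_pointReflection, coe_pointReflection,
    eq_vadd_iff_vsub_eq, ← vsub_sub_vsub_cancel_right _ _ p, Equiv.pointReflection_vsub_right,
    Equiv.pointReflection_vsub_right, vadd_vsub_assoc, smul_add, add_sub_cancel_right]

theorem pointReflection_mul_pointReflection (a b : P) :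
    pointReflection k a * pointReflection k b = constVAdd k P (2 • (a -ᵥ b)) := by
  conv_lhs => rw [← vsub_vadd a b]
  rw [pointReflection_vadd, mul_assoc, ← sq, pointReflection_sq, mul_one]

theorem pointReflection_mul_pointReflection_mul_pointReflection (a b c : P) :
    pointReflection k a * pointReflection k b * pointReflection k c =
      pointReflection k ((a -ᵥ b) +ᵥ c) := by
  rw [pointReflection_mul_pointReflection, pointReflection_vadd]

theorem constVAdd_mul_pointReflection_ne_one {u : V} (hu : 2 • u ≠ 0) (v : V) (a : P) :
    constVAdd k P v * pointReflection k a ≠ 1 := by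
  intro h
  have h₁ := congr($h a)
  have h₂ := congr($h (u +ᵥ a))
  simp only [AffineEquiv.coe_mul, comp_apply, AffineEquiv.coe_one, id_eq, constVAdd_apply,
    coe_pointReflection] at h₁ h₂
  rw [Equiv.pointReflection_self] at h₁
  have h₃ := congrArg₂ (· -ᵥ ·) h₂ h₁
  rw [vadd_vsub_vadd_cancel_left, Equiv.pointReflection_vsub_left, vadd_vsub,
    vsub_vadd_eq_vsub_sub, vsub_self, zero_sub, neg_eq_iff_add_eq_zero, ← two_nsmul] at h₃
  exact hu h₃

end PointReflection

theorem injective_of_map_eq_pointReflection {k V P : Type*} [Ring k] [AddCommGroup V]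
    [Module k V] [AddTorsor V P] {G : Type*} [Group G] {x y z : G}
    (hgen : closure {x, y, z} = ⊤) (hx : x ^ 2 = 1) (hy : y ^ 2 = 1) (hz : z ^ 2 = 1)
    (hxyz : (x * y * z) ^ 2 = 1) {φ : G →* P ≃ᵃ[k] P} {a b c : P}
    (ha : φ x = pointReflection k a) (hb : φ y = pointReflection k b)
    (hc : φ z = pointReflection k c) (hind : LinearIndependent ℤ ![b -ᵥ a, c -ᵥ a]) :
    Injective φ := by
  have hφ : ∀ m n : ℤ, φ ((y * x) ^ m * (z * x) ^ n) =
      constVAdd k P ((2 * m) • (b -ᵥ a) + (2 * n) • (c -ᵥ a)) := by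
    intro m n
    rw [map_mul, map_zpow, map_zpow, map_mul, map_mul, ha, hb, hc,
      pointReflection_mul_pointReflection, pointReflection_mul_pointReflection, ← constVAdd_zsmul,
      ← constVAdd_zsmul, mul_def, ← constVAdd_add]
    congr 1
    module
  rw [injective_iff_map_eq_one]
  intro q hq
  obtain ⟨m, n, rfl | rfl⟩ := exists_eq_zpow_mul_zpow_or_mul hgen hx hy hz hxyz q
  · have hv : (2 * m) • (b -ᵥ a) + (2 * n) • (c -ᵥ a) = 0 :=
      (vadd_right_cancel_iff a).1 (by rw [zero_vadd, ← constVAdd_apply k, ← hφ, hq]; rfl)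
    obtain ⟨hm, hn⟩ := LinearIndependent.pair_iff.1 hind _ _ hv
    obtain rfl : m = 0 := by omega
    obtain rfl : n = 0 := by omega
    simp
  · rw [map_mul, hφ, ha] at hq
    refine absurd hq (constVAdd_mul_pointReflection_ne_one (u := b -ᵥ a) (fun h => ?_) _ _)
    have := LinearIndependent.pair_iff.1 hind 2 0 (by simpa [← natCast_zsmul] using h)
    simp at this

theorem PresentedGroup.closure_of_zero_one_two (rels : Set (FreeGroup (Fin 3))) :
    closure {of 0, of 1, of 2} = (⊤ : Subgroup (PresentedGroup rels)) := by
  rw [← closure_range_of]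
  congr 1
  ext
  simp [Fin.exists_fin_succ, eq_comm]

theorem stmt_2 :
    ∃ σ : PresentedGroup
        ({FreeGroup.of 0 ^ 2, FreeGroup.of 1 ^ 2, FreeGroup.of 2 ^ 2,
          (FreeGroup.of 0 * FreeGroup.of 1 * FreeGroup.of 2) ^ 2} :
          Set (FreeGroup (Fin 3))) →* ((ℝ × ℝ) ≃ᵃ[ℝ] (ℝ × ℝ)),
      (∀ p : ℝ × ℝ, σ (PresentedGroup.of 0) p = (2 - p.1, 1 - p.2)) ∧
      (∀ p : ℝ × ℝ, σ (PresentedGroup.of 1) p = (3 - p.1, 3 - p.2)) ∧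
      (∀ p : ℝ × ℝ, σ (PresentedGroup.of 2) p = (1 - p.1, 2 - p.2)) ∧
      Function.Injective σ := by
  refine ⟨PresentedGroup.toGroup (f := ![pointReflection ℝ ((1, 1 / 2) : ℝ × ℝ),
    pointReflection ℝ ((3 / 2, 3 / 2) : ℝ × ℝ), pointReflection ℝ ((1 / 2, 1) : ℝ × ℝ)]) ?rels,
    ?_, ?_, ?_, ?_⟩
  case rels =>
    rintro r (rfl | rfl | rfl | rfl) <;>
      simp [pointReflection_sq, pointReflection_mul_pointReflection_mul_pointReflection]
  iterate 3
    intro p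
    ext <;> simp [Equiv.pointReflection_apply] <;> ring
  -- `of i` unfolds to `mk rels (FreeGroup.of i)`, so `one_of_mem` gives the relations in `G₁`.
  refine injective_of_map_eq_pointReflection (PresentedGroup.closure_of_zero_one_two _)
    (PresentedGroup.one_of_mem (by simp)) (PresentedGroup.one_of_mem (by simp))
    (PresentedGroup.one_of_mem (by simp)) (PresentedGroup.one_of_mem (by simp))
    (PresentedGroup.toGroup.of _) (PresentedGroup.toGroup.of _) (PresentedGroup.toGroup.of _) ?_
  rw [LinearIndependent.pair_iff]
  intro s t h
  norm_num [Prod.ext_iff] at h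
  have hs : (s : ℝ) = 0 := by linarith
  have ht : (t : ℝ) = 0 := by linarith
  exact ⟨mod_cast hs, mod_cast ht⟩
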